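/- Subexponential growth of permutational wreath products: Let G be a group with finite symmetric generating set S of subexponential growth, acting transitively on the right on a set X with basepoint ξ, and let H be a group with finite symmetric generating set T of subexponential growth. Assume the inverted orbit growth of (G,S) on (X,ξ) is sublinear (Δ(R)/R → 0 as R → ∞) and the inverted orbit choice growth is subexponential (Σ(R)^{1/R} → 1 as R → ∞). Then the permutational wreath product W = H ≀_X G, with its finite symmetric generating set U = S ∪ {t@ξ : t ∈ T}, has subexponential growth: v_{W,U}(R)^{1/R} → 1 as R → ∞. -/

import Mathlib

/-!
An element of the ball of radius `R` of `W` is a product of at most `R` generators. Its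
`G`-coordinate has `S`-length at most `R`; its lamps are lit only on the inverted orbit of the
word formed by the inverses of its `S`-letters, a set of at most `Δ(R)` points chosen among
`Σ(R)` possibilities; and the `T`-lengths of its lamps add up to at most `R`.
Subexponential growth of `H` gives `v_{H,T}(r) ≤ C e^{εr}`, and Rankin's trick bounds the number
of lamp configurations on `k` points of total length at most `R` by `e^{2εR} M^k` with
`M = C / (1 - e^{-ε})`. Hence `v_{W,U}(R) ≤ Σ(R) v_{G,S}(R) e^{2εR} M^{Δ(R)}`, and each
factor is at most `e^{εR}` for large `R`.
-/

set_option linter.unusedSectionVars false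

/-- The underlying type of the unrestricted permutational wreath product
`H ≀≀_X G = (X → H) ⋊ G`, where the group `G` acts on `X` on the right
(encoded as a `Gᵐᵒᵖ`-action). -/
@[ext] structure PermWreath (H G X : Type*) where
  fn : X → H
  pt : G

namespace PermWreath

variable {H G X : Type*} [Group H] [Group G] [MulAction Gᵐᵒᵖ X]

instance : One (PermWreath H G X) := ⟨⟨1, 1⟩⟩
instance : Mul (PermWreath H G X) :=
  ⟨fun a b => ⟨fun x => a.fn x * b.fn (MulOpposite.op a.pt • x), a.pt * b.pt⟩⟩
instance : Inv (PermWreath H G X) :=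
  ⟨fun a => ⟨fun x => (a.fn (MulOpposite.op a.pt⁻¹ • x))⁻¹, a.pt⁻¹⟩⟩

@[simp] lemma mul_fn (a b : PermWreath H G X) :
    (a * b).fn = fun x => a.fn x * b.fn (MulOpposite.op a.pt • x) := rfl
@[simp] lemma mul_pt (a b : PermWreath H G X) : (a * b).pt = a.pt * b.pt := rfl
@[simp] lemma one_fn : (1 : PermWreath H G X).fn = 1 := rfl
@[simp] lemma one_pt : (1 : PermWreath H G X).pt = 1 := rfl
@[simp] lemma inv_fn (a : PermWreath H G X) :
    (a⁻¹).fn = fun x => (a.fn (MulOpposite.op a.pt⁻¹ • x))⁻¹ := rfl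
@[simp] lemma inv_pt (a : PermWreath H G X) : (a⁻¹).pt = a.pt⁻¹ := rfl

/-- The unrestricted permutational wreath product is a group. -/
instance : Group (PermWreath H G X) :=
  Group.ofLeftAxioms
    (fun a b c => by
      ext x
      · simp only [mul_fn, mul_pt, MulOpposite.op_mul, mul_smul]
        rw [mul_assoc]
      · simp [mul_assoc])
    (fun a => by
      ext x
      · simp
      · simp)
    (fun a => by
      ext x
      · simp
      · simp)

/-- The restricted permutational wreath product `H ≀_X G`: the subgroup of the
unrestricted wreath product consisting of elements whose function component is
finitely supported. -/
def restricted (H G X : Type*) [Group H] [Group G] [MulAction Gᵐᵒᵖ X] :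
    Subgroup (PermWreath H G X) where
  carrier := {w | (Function.mulSupport w.fn).Finite}
  one_mem' := by
    simp [Set.mem_setOf_eq, one_fn]
  mul_mem' := by
    intro a b ha hb
    refine Set.Finite.subset
      (Set.Finite.union ha (Set.Finite.preimage
        (Set.injOn_of_injective (MulAction.injective (MulOpposite.op a.pt))) hb)) ?_
    intro x hx
    by_contra hmem
    simp only [Set.mem_union, Set.mem_preimage, Function.mem_mulSupport, not_or,
      not_not] at hmem
    exact hx (by simp [mul_fn, hmem.1, hmem.2] : (a * b).fn x = 1)
  inv_mem' := by
    intro a ha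
    refine Set.Finite.subset
      (Set.Finite.preimage
        (Set.injOn_of_injective (MulAction.injective (MulOpposite.op a.pt⁻¹))) ha) ?_
    intro x hx
    by_contra hmem
    simp only [Set.mem_preimage, Function.mem_mulSupport, not_not] at hmem
    exact hx (by simp only [inv_fn]; rw [hmem]; simp)

end PermWreath

/-- The function `X → H` with value `t` at `ξ` and `1` elsewhere (the decoration `t@ξ`). -/
noncomputable def atPoint {H : Type*} {X : Type*} [One H] (ξ : X) (t : H) : X → H :=
  fun x => by classical exact if x = ξ then t else 1

/-- The word norm of `g` with respect to a generating set `S`. -/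
noncomputable def wordNorm {G : Type*} [Group G] (S : Set G) (g : G) : ℕ :=
  sInf {n | ∃ l : List G, (∀ s ∈ l, s ∈ S) ∧ l.length = n ∧ l.prod = g}

/-- The growth function `v_{G,S}(R) = #{g : ‖g‖_S ≤ R}`. -/
noncomputable def growthFn {G : Type*} [Group G] (S : Set G) (R : ℕ) : ℕ :=
  Nat.card {g : G // wordNorm S g ≤ R}

/-- The inverted orbit `O(w) = {ξ·w_{i+1}⋯w_ℓ : 0 ≤ i ≤ ℓ}` of a word
`w = (w₁, …, w_ℓ)` over `G`, for the right action of `G` on `X` with basepoint `ξ`. -/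
def invertedOrbit {G X : Type*} [Group G] [MulAction Gᵐᵒᵖ X] (ξ : X) (w : List G) :
    Set X :=
  {x | ∃ i ≤ w.length, x = MulOpposite.op (w.drop i).prod • ξ}

/-- The inverted orbit growth `Δ(R)`: the largest cardinality of the inverted orbit of
a word over `S` of length at most `R`. -/
noncomputable def invOrbitGrowth {G X : Type*} [Group G] [MulAction Gᵐᵒᵖ X]
    (S : Set G) (ξ : X) (R : ℕ) : ℕ :=
  sSup {n | ∃ w : List G, (∀ s ∈ w, s ∈ S) ∧ w.length ≤ R ∧
    n = Nat.card ↥(invertedOrbit ξ w)}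

/-- The inverted orbit choice growth `Σ(R)`: the number of distinct subsets of `X`
arising as inverted orbits of words over `S` of length at most `R`. -/
noncomputable def invOrbitChoices {G X : Type*} [Group G] [MulAction Gᵐᵒᵖ X]
    (S : Set G) (ξ : X) (R : ℕ) : ℕ :=
  Nat.card {O : Set X // ∃ w : List G, (∀ s ∈ w, s ∈ S) ∧ w.length ≤ R ∧
    O = invertedOrbit ξ w}

open Filter Function MulOpposite Real

section WordNorm

variable {G : Type*} [Group G] {S : Set G}

lemma finite_setOf_forall_mem_length_le (hS : S.Finite) (R : ℕ) :
    {l : List G | (∀ s ∈ l, s ∈ S) ∧ l.length ≤ R}.Finite := by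
  have : Finite S := hS.to_subtype
  refine ((List.finite_length_le S R).image (List.map (↑))).subset ?_
  rintro l ⟨hl, hlen⟩
  lift l to List S using hl
  exact ⟨l, by simpa using hlen, rfl⟩

lemma wordNorm_prod_le_length {l : List G} (hl : ∀ s ∈ l, s ∈ S) :
    wordNorm S l.prod ≤ l.length :=
  Nat.sInf_le ⟨l, hl, rfl, rfl⟩

lemma wordNorm_one : wordNorm S 1 = 0 :=
  Nat.le_zero.mp (wordNorm_prod_le_length (l := []) (by simp))

lemma wordNorm_le_length_of_prod_eq_inv (hsym : S⁻¹ = S) {l : List G} (hl : ∀ s ∈ l, s ∈ S)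
    {g : G} (hg : l.prod = g⁻¹) : wordNorm S g ≤ l.length := by
  have hl' : ∀ s ∈ (l.map (·⁻¹)).reverse, s ∈ S := by
    simp only [List.mem_reverse, List.mem_map, forall_exists_index, and_imp]
    rintro _ s hs rfl
    exact hsym ▸ Set.inv_mem_inv.mpr (hl s hs)
  simpa [← List.prod_inv_reverse, hg] using wordNorm_prod_le_length hl'

lemma exists_list_prod_eq_length_eq_wordNorm (hsym : S⁻¹ = S)
    (hgen : Subgroup.closure S = ⊤) (g : G) :
    ∃ l : List G, (∀ s ∈ l, s ∈ S) ∧ l.length = wordNorm S g ∧ l.prod = g := by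
  have hg : g ∈ Submonoid.closure S := by
    have : g ∈ (Subgroup.closure S).toSubmonoid := by rw [hgen]; trivial
    rwa [Subgroup.closure_toSubmonoid, hsym, Set.union_self] at this
  obtain ⟨l, hl, rfl⟩ := Submonoid.exists_list_of_mem_closure hg
  have hne : Set.Nonempty
      {n | ∃ l' : List G, (∀ s ∈ l', s ∈ S) ∧ l'.length = n ∧ l'.prod = l.prod} :=
    ⟨l.length, l, hl, rfl, rfl⟩
  exact Nat.sInf_mem hne

lemma wordNorm_mul_le (hsym : S⁻¹ = S) (hgen : Subgroup.closure S = ⊤) (g h : G) :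
    wordNorm S (g * h) ≤ wordNorm S g + wordNorm S h := by
  obtain ⟨l, hl, hlen, rfl⟩ := exists_list_prod_eq_length_eq_wordNorm hsym hgen g
  obtain ⟨l', hl', hlen', rfl⟩ := exists_list_prod_eq_length_eq_wordNorm hsym hgen h
  rw [← hlen, ← hlen', ← List.length_append, ← List.prod_append]
  exact wordNorm_prod_le_length fun s hs => (List.mem_append.mp hs).elim (hl s) (hl' s)

lemma wordNorm_le_one {s : G} (hs : s ∈ S) : wordNorm S s ≤ 1 := by
  simpa using wordNorm_prod_le_length (S := S) (l := [s]) (by simpa using hs)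

lemma finite_setOf_wordNorm_le (hfin : S.Finite) (hsym : S⁻¹ = S)
    (hgen : Subgroup.closure S = ⊤) (R : ℕ) : {g : G | wordNorm S g ≤ R}.Finite := by
  refine ((finite_setOf_forall_mem_length_le hfin R).image List.prod).subset fun g hg => ?_
  obtain ⟨l, hl, hlen, rfl⟩ := exists_list_prod_eq_length_eq_wordNorm hsym hgen g
  exact ⟨l, ⟨hl, hlen ▸ hg⟩, rfl⟩

lemma growthFn_eq_ncard (R : ℕ) : growthFn S R = {g : G | wordNorm S g ≤ R}.ncard :=
  Nat.card_coe_set_eq _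

lemma one_le_growthFn (hfin : S.Finite) (hsym : S⁻¹ = S) (hgen : Subgroup.closure S = ⊤)
    (R : ℕ) : 1 ≤ growthFn S R := by
  rw [growthFn_eq_ncard, Nat.one_le_iff_ne_zero]
  exact Set.ncard_ne_zero_of_mem (a := 1) (by simp [wordNorm_one])
    (finite_setOf_wordNorm_le hfin hsym hgen R)

end WordNorm

section InvertedOrbit

variable {G X : Type*} [Group G] [MulAction Gᵐᵒᵖ X] (ξ : X)

lemma invertedOrbit_eq_image (w : List G) :
    invertedOrbit ξ w = (fun i => op (w.drop i).prod • ξ) '' Set.Iic w.length := by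
  ext x
  simp [invertedOrbit, eq_comm]

lemma invertedOrbit_finite (w : List G) : (invertedOrbit ξ w).Finite :=
  invertedOrbit_eq_image ξ w ▸ (Set.finite_Iic _).image _

lemma ncard_invertedOrbit_le (w : List G) : (invertedOrbit ξ w).ncard ≤ w.length + 1 := by
  rw [invertedOrbit_eq_image]
  exact (Set.ncard_image_le (Set.finite_Iic _)).trans (by simp)

lemma self_mem_invertedOrbit (w : List G) : ξ ∈ invertedOrbit ξ w :=
  ⟨w.length, le_rfl, by simp⟩

lemma smul_invertedOrbit_subset_append_singleton (w : List G) (s : G) :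
    (op s • ·) '' invertedOrbit ξ w ⊆ invertedOrbit ξ (w ++ [s]) := by
  rintro _ ⟨_, ⟨i, hi, rfl⟩, rfl⟩
  refine ⟨i, by simp; omega, ?_⟩
  rw [List.drop_append_of_le_length hi, List.prod_append, List.prod_singleton, op_mul, mul_smul]

def invertedOrbits (S : Set G) (ξ : X) (R : ℕ) : Set (Set X) :=
  {O | ∃ w : List G, (∀ s ∈ w, s ∈ S) ∧ w.length ≤ R ∧ O = invertedOrbit ξ w}

variable {S : Set G} {R : ℕ}

lemma ncard_invertedOrbit_le_invOrbitGrowth {w : List G} (hw : ∀ s ∈ w, s ∈ S)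
    (hlen : w.length ≤ R) : (invertedOrbit ξ w).ncard ≤ invOrbitGrowth S ξ R := by
  refine le_csSup ⟨R + 1, ?_⟩ ⟨w, hw, hlen, Nat.card_coe_set_eq _⟩
  rintro _ ⟨w', -, hw', rfl⟩
  rw [Nat.card_coe_set_eq]
  exact (ncard_invertedOrbit_le ξ w').trans (by omega)

lemma invOrbitChoices_eq_ncard : invOrbitChoices S ξ R = (invertedOrbits S ξ R).ncard :=
  Nat.card_coe_set_eq _

lemma invertedOrbits_finite (hS : S.Finite) (R : ℕ) : (invertedOrbits S ξ R).Finite := by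
  refine ((finite_setOf_forall_mem_length_le hS R).image (invertedOrbit ξ)).subset ?_
  rintro _ ⟨w, hw, hlen, rfl⟩
  exact ⟨w, ⟨hw, hlen⟩, rfl⟩

end InvertedOrbit

section Subexponential

variable {f : ℕ → ℝ}

lemma eventually_le_exp_mul_of_tendsto_rpow_inv (hf : ∀ R, 0 ≤ f R)
    (h : Tendsto (fun R : ℕ => f R ^ ((R : ℝ)⁻¹)) atTop (nhds 1)) {ε : ℝ} (hε : 0 < ε) :
    ∀ᶠ R : ℕ in atTop, f R ≤ exp (ε * R) := by
  filter_upwards [h.eventually_lt_const (one_lt_exp_iff.mpr hε), eventually_ge_atTop 1]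
    with R hlt hR
  have hR0 : (R : ℝ) ≠ 0 := Nat.cast_ne_zero.mpr (by omega)
  have := rpow_le_rpow (rpow_nonneg (hf R) _) hlt.le (Nat.cast_nonneg R)
  rwa [← rpow_mul (hf R), inv_mul_cancel₀ hR0, rpow_one, ← exp_mul] at this

lemma exists_le_mul_exp_of_tendsto_rpow_inv (hf : ∀ R, 0 ≤ f R)
    (h : Tendsto (fun R : ℕ => f R ^ ((R : ℝ)⁻¹)) atTop (nhds 1)) {ε : ℝ} (hε : 0 < ε) :
    ∃ C : ℝ, 1 ≤ C ∧ ∀ r : ℕ, f r ≤ C * exp (ε * r) := by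
  obtain ⟨N, hN⟩ := eventually_atTop.mp (eventually_le_exp_mul_of_tendsto_rpow_inv hf h hε)
  have hsum : 0 ≤ ∑ r ∈ Finset.range N, f r := Finset.sum_nonneg fun r _ => hf r
  refine ⟨1 + ∑ r ∈ Finset.range N, f r, by linarith, fun r => ?_⟩
  have hexp : 1 ≤ exp (ε * r) := one_le_exp (by positivity)
  rcases le_or_gt N r with hr | hr
  · exact (hN r hr).trans (le_mul_of_one_le_left (exp_pos _).le (by linarith))
  · have := Finset.single_le_sum (fun i _ => hf i) (Finset.mem_range.mpr hr)
    nlinarith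

lemma eventually_pow_le_exp_mul {d : ℕ → ℕ}
    (hd : Tendsto (fun R : ℕ => (d R : ℝ) / R) atTop (nhds 0)) {M : ℝ} (hM : 0 < M)
    {ε : ℝ} (hε : 0 < ε) : ∀ᶠ R : ℕ in atTop, M ^ d R ≤ exp (ε * R) := by
  have hlim : Tendsto (fun R : ℕ => (d R : ℝ) / R * log M) atTop (nhds 0) := by
    simpa using hd.mul_const (log M)
  filter_upwards [hlim.eventually_lt_const hε, eventually_ge_atTop 1] with R hlt hR
  have hR0 : (0 : ℝ) < R := by exact_mod_cast hR
  rw [← exp_log hM, ← exp_nat_mul, exp_le_exp]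
  rw [div_mul_eq_mul_div, div_lt_iff₀ hR0] at hlt
  exact hlt.le

lemma tendsto_rpow_inv_of_eventually_le_exp_mul (h₁ : ∀ R, 1 ≤ f R)
    (h₂ : ∀ ε : ℝ, 0 < ε → ∀ᶠ R : ℕ in atTop, f R ≤ exp (ε * R)) :
    Tendsto (fun R : ℕ => f R ^ ((R : ℝ)⁻¹)) atTop (nhds 1) := by
  refine tendsto_order.mpr ⟨fun a ha => .of_forall fun R =>
    ha.trans_le (one_le_rpow (h₁ R) (by positivity)), fun b hb => ?_⟩
  have hε : 0 < log b / 2 := by linarith [log_pos hb]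
  filter_upwards [h₂ _ hε, eventually_ge_atTop 1] with R hle hR
  have hR0 : (R : ℝ) ≠ 0 := Nat.cast_ne_zero.mpr (by omega)
  calc f R ^ ((R : ℝ)⁻¹) ≤ exp (log b / 2 * R) ^ ((R : ℝ)⁻¹) :=
        rpow_le_rpow (by linarith [h₁ R]) hle (by positivity)
    _ = exp (log b / 2) := by
        rw [← exp_mul, mul_assoc, mul_inv_cancel₀ hR0, mul_one]
    _ < exp (log b) := exp_lt_exp.mpr (by linarith)
    _ = b := exp_log (by linarith)

end Subexponential

section WeightCount

variable {H : Type*} (ν : H → ℕ)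

lemma setOf_sum_le_subset_pi {ι : Type*} [Fintype ι] (R : ℕ) :
    {φ : ι → H | ∑ i, ν (φ i) ≤ R} ⊆ Set.univ.pi fun _ => {h | ν h ≤ R} :=
  fun φ hφ i _ => (Finset.single_le_sum (fun j _ => Nat.zero_le (ν (φ j)))
    (Finset.mem_univ i)).trans hφ

/-- Rankin's trick: weigh each tuple by `exp (a * (R - ∑ i, ν (φ i))) ≥ 1` and sum over all
tuples of elements of weight at most `R`. -/
lemma ncard_setOf_sum_le_le_exp_mul_pow {ι : Type*} [Fintype ι]
    (hν : ∀ r, {h | ν h ≤ r}.Finite) {a : ℝ} (ha : 0 ≤ a) (R : ℕ) :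
    ({φ : ι → H | ∑ i, ν (φ i) ≤ R}.ncard : ℝ) ≤
      exp (a * R) * (∑ h ∈ (hν R).toFinset, exp (-a * ν h)) ^ Fintype.card ι := by
  classical
  set P := Fintype.piFinset fun _ : ι => (hν R).toFinset
  set F := P.filter fun φ => ∑ i, ν (φ i) ≤ R
  have hset : {φ : ι → H | ∑ i, ν (φ i) ≤ R} = F := by
    ext φ
    simp only [Finset.coe_filter, F, P, Fintype.mem_piFinset, Set.Finite.mem_toFinset]
    exact ⟨fun hφ => ⟨fun i => setOf_sum_le_subset_pi ν R hφ i trivial, hφ⟩, And.right⟩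
  have hweight : ∀ φ ∈ F, (1 : ℝ) ≤ exp (a * R) * ∏ i, exp (-a * ν (φ i)) := by
    intro φ hφ
    have hsum : (∑ i, (ν (φ i) : ℝ)) ≤ R := by exact_mod_cast (Finset.mem_filter.mp hφ).2
    rw [← exp_sum, ← exp_add, ← Finset.mul_sum]
    exact one_le_exp (by nlinarith)
  rw [hset, Set.ncard_coe_finset]
  calc (F.card : ℝ) ≤ ∑ φ ∈ F, exp (a * R) * ∏ i, exp (-a * ν (φ i)) := by
        simpa using Finset.card_nsmul_le_sum _ _ 1 hweight
    _ ≤ ∑ φ ∈ P, exp (a * R) * ∏ i, exp (-a * ν (φ i)) :=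
        Finset.sum_le_sum_of_subset_of_nonneg (Finset.filter_subset _ _)
          fun _ _ _ => by positivity
    _ = exp (a * R) * (∑ h ∈ (hν R).toFinset, exp (-a * ν h)) ^ Fintype.card ι := by
        rw [← Finset.mul_sum, ← Finset.card_univ, ← Finset.prod_const, Finset.prod_univ_sum]

lemma sum_exp_neg_le_div (hν : ∀ r, {h | ν h ≤ r}.Finite) {C ε : ℝ} (hε : 0 < ε)
    (hC : ∀ r : ℕ, ({h | ν h ≤ r}.ncard : ℝ) ≤ C * exp (ε * r)) (R : ℕ) :
    ∑ h ∈ (hν R).toFinset, exp (-(2 * ε) * ν h) ≤ C / (1 - exp (-ε)) := by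
  classical
  have hq : exp (-ε) < 1 := exp_lt_one_iff.mpr (by linarith)
  have hfiber : ∀ r, (((hν R).toFinset.filter (ν · = r)).card : ℝ) ≤ C * exp (ε * r) := by
    intro r
    have : ((hν R).toFinset.filter (ν · = r)).card ≤ {h | ν h ≤ r}.ncard := by
      rw [← Set.ncard_coe_finset]
      exact Set.ncard_le_ncard (fun h hh => by simp_all) (hν r)
    exact (Nat.cast_le.mpr this).trans (hC r)
  have hC0 : 0 ≤ C := nonneg_of_mul_nonneg_left ((Nat.cast_nonneg _).trans (hC 0)) (exp_pos _)
  rw [Finset.sum_comp (fun r : ℕ => exp (-(2 * ε) * r))]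
  calc ∑ r ∈ (hν R).toFinset.image ν,
        ((hν R).toFinset.filter (ν · = r)).card • exp (-(2 * ε) * r)
      ≤ ∑ r ∈ (hν R).toFinset.image ν, C * exp (-ε) ^ r := by
        refine Finset.sum_le_sum fun r _ => ?_
        rw [nsmul_eq_mul, ← exp_nat_mul]
        calc _ ≤ C * exp (ε * r) * exp (-(2 * ε) * r) := by gcongr; exact hfiber r
          _ = C * exp (r * -ε) := by rw [mul_assoc, ← exp_add]; ring_nf
    _ ≤ ∑' r : ℕ, C * exp (-ε) ^ r :=
        ((summable_geometric_of_lt_one (exp_pos _).le hq).mul_left C).sum_le_tsum _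
          fun _ _ => by positivity
    _ = C / (1 - exp (-ε)) := by
        rw [tsum_mul_left, tsum_geometric_of_lt_one (exp_pos _).le hq, div_eq_mul_inv]

lemma one_le_div_one_sub_exp_neg {C ε : ℝ} (hε : 0 < ε) (hC : 1 ≤ C) :
    1 ≤ C / (1 - exp (-ε)) := by
  rw [le_div_iff₀ (sub_pos.mpr (exp_lt_one_iff.mpr (by linarith)))]
  nlinarith [exp_pos (-ε)]

lemma ncard_setOf_sum_le_le_of_growth {ι : Type*} [Fintype ι]
    (hν : ∀ r, {h | ν h ≤ r}.Finite) {C ε : ℝ} (hε : 0 < ε)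
    (hC : ∀ r : ℕ, ({h | ν h ≤ r}.ncard : ℝ) ≤ C * exp (ε * r)) (R : ℕ) :
    ({φ : ι → H | ∑ i, ν (φ i) ≤ R}.ncard : ℝ) ≤
      exp (2 * ε * R) * (C / (1 - exp (-ε))) ^ Fintype.card ι := by
  refine (ncard_setOf_sum_le_le_exp_mul_pow ν hν (a := 2 * ε) (by positivity) R).trans ?_
  exact mul_le_mul_of_nonneg_left (pow_le_pow_left₀ (Finset.sum_nonneg fun _ _ => (exp_pos _).le)
    (sum_exp_neg_le_div ν hν hε hC R) _) (exp_pos _).le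

end WeightCount

lemma ncard_le_ncard_mul_of_subset_biUnion {α ι : Type*} {s : Set α} {t : Set ι}
    {P : ι → Set α} (ht : t.Finite) (hP : ∀ i ∈ t, (P i).Finite)
    (hs : s ⊆ ⋃ i ∈ t, P i) {B : ℝ} (hB : ∀ i ∈ t, ((P i).ncard : ℝ) ≤ B) :
    (s.ncard : ℝ) ≤ t.ncard * B := by
  have hcover : s ⊆ ⋃ i ∈ ht.toFinset, P i := by simpa using hs
  calc (s.ncard : ℝ) ≤ (⋃ i ∈ ht.toFinset, P i).ncard := by
        exact_mod_cast Set.ncard_le_ncard hcover (by simpa using ht.biUnion hP)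
    _ ≤ ∑ i ∈ ht.toFinset, ((P i).ncard : ℝ) := by
        exact_mod_cast ht.toFinset.set_ncard_biUnion_le P
    _ ≤ ht.toFinset.card • B := Finset.sum_le_card_nsmul _ _ _ (by simpa using hB)
    _ = t.ncard * B := by rw [nsmul_eq_mul, Set.ncard_eq_toFinset_card t ht]

lemma atPoint_eq_mulSingle {H X : Type*} [One H] [DecidableEq X] (ξ : X) (t : H) :
    atPoint ξ t = Pi.mulSingle ξ t := by
  funext x
  simp only [atPoint, Pi.mulSingle_apply]
  congr

namespace PermWreath

variable {H G X : Type*} [Group H] [Group G] [MulAction Gᵐᵒᵖ X]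

def generators (S : Set G) (T : Set H) (ξ : X) : Set (PermWreath H G X) :=
  ((fun s : G => PermWreath.mk (1 : X → H) s) '' S) ∪
    ((fun t : H => PermWreath.mk (atPoint ξ t) (1 : G)) '' T)

def inl : (X → H) →* PermWreath H G X where
  toFun f := ⟨f, 1⟩
  map_one' := rfl
  map_mul' f f' := by ext <;> simp

def inr : G →* PermWreath H G X where
  toFun g := ⟨1, g⟩
  map_one' := rfl
  map_mul' g g' := by ext <;> simp

@[simp] lemma inl_apply (f : X → H) : (inl f : PermWreath H G X) = ⟨f, 1⟩ := rfl

@[simp] lemma inr_apply (g : G) : (inr g : PermWreath H G X) = ⟨1, g⟩ := rfl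

lemma mk_eq_inl_mul_inr (f : X → H) (g : G) :
    (⟨f, g⟩ : PermWreath H G X) = inl f * inr g := by
  ext <;> simp

lemma inr_mul_inl_mul_inr_inv (g : G) (f : X → H) :
    inr g * inl f * (inr g)⁻¹ = (inl fun x => f (op g • x) : PermWreath H G X) := by
  ext <;> simp

lemma inr_mul_inl_mulSingle_mul_inr_inv [DecidableEq X] (g : G) (x : X) (h : H) :
    inr g * inl (Pi.mulSingle x h) * (inr g)⁻¹ =
      (inl (Pi.mulSingle ((op g)⁻¹ • x) h) : PermWreath H G X) := by
  rw [inr_mul_inl_mul_inr_inv]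
  exact congrArg inl (Pi.mulSingle_comp_equiv (MulAction.toPerm (op g)) x h)

lemma generators_subset_restricted (S : Set G) (T : Set H) (ξ : X) :
    generators S T ξ ⊆ restricted H G X := by
  classical
  rintro _ (⟨s, -, rfl⟩ | ⟨t, -, rfl⟩)
  · simp [restricted]
  · exact (Set.finite_singleton ξ).subset (by
      simpa [atPoint_eq_mulSingle] using Pi.mulSupport_mulSingle_subset)

variable {S : Set G} {T : Set H} {ξ : X}

lemma inr_mem_closure_generators (hSgen : Subgroup.closure S = ⊤) (g : G) :
    inr g ∈ Subgroup.closure (generators S T ξ) := by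
  have hg : inr g ∈ (Subgroup.closure S).map (inr (H := H) (X := X)) :=
    ⟨g, hSgen ▸ trivial, rfl⟩
  rw [MonoidHom.map_closure] at hg
  exact Subgroup.closure_mono Set.subset_union_left hg

lemma inl_mulSingle_mem_closure_generators [DecidableEq X] (hSgen : Subgroup.closure S = ⊤)
    (hTgen : Subgroup.closure T = ⊤) (htrans : ∀ x y : X, ∃ g : G, op g • x = y) (x : X)
    (h : H) : inl (Pi.mulSingle x h) ∈ Subgroup.closure (generators S T ξ) := by
  set K := Subgroup.closure (generators S T ξ)
  have hbase : inl (Pi.mulSingle ξ h) ∈ K := by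
    have hh : inl (Pi.mulSingle ξ h) ∈ (Subgroup.closure T).map
        ((inl : (X → H) →* PermWreath H G X).comp (MonoidHom.mulSingle _ ξ)) :=
      ⟨h, hTgen ▸ trivial, rfl⟩
    rw [MonoidHom.map_closure] at hh
    refine Subgroup.closure_mono ?_ hh
    rintro _ ⟨t, ht, rfl⟩
    exact Or.inr ⟨t, ht, by simp [atPoint_eq_mulSingle]⟩
  obtain ⟨g, hg⟩ := htrans x ξ
  have hx : x = (op g)⁻¹ • ξ := by rw [← hg, inv_smul_smul]
  rw [hx, ← inr_mul_inl_mulSingle_mul_inr_inv]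
  have hinr := inr_mem_closure_generators (T := T) (ξ := ξ) hSgen g
  exact K.mul_mem (K.mul_mem hinr hbase) (K.inv_mem hinr)

lemma closure_generators (hSgen : Subgroup.closure S = ⊤) (hTgen : Subgroup.closure T = ⊤)
    (htrans : ∀ x y : X, ∃ g : G, op g • x = y) :
    Subgroup.closure (generators S T ξ) = restricted H G X := by
  classical
  refine le_antisymm ((Subgroup.closure_le _).mpr (generators_subset_restricted S T ξ)) ?_
  rintro ⟨f, g⟩ (hf : (mulSupport f).Finite)
  rw [mk_eq_inl_mul_inr]
  refine Subgroup.mul_mem _ ?_ (inr_mem_closure_generators hSgen g)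
  have hsingle : ∀ x, Pi.mulSingle x (f x) ∈ (Subgroup.closure (generators S T ξ)).comap inl :=
    fun x => inl_mulSingle_mem_closure_generators hSgen hTgen htrans x (f x)
  exact Submonoid.pi_mem_of_mulSingle_mem_aux hf.toFinset f (fun x hx => by simpa using hx)
    fun x _ => hsingle x

def restrictedGenerators (S : Set G) (T : Set H) (ξ : X) : Set (restricted H G X) :=
  (↑) ⁻¹' generators S T ξ

lemma closure_restrictedGenerators (hSgen : Subgroup.closure S = ⊤)
    (hTgen : Subgroup.closure T = ⊤) (htrans : ∀ x y : X, ∃ g : G, op g • x = y) :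
    Subgroup.closure (restrictedGenerators S T ξ) = ⊤ := by
  have := Subgroup.closure_preimage_eq_top (generators S T ξ)
  rw [closure_generators hSgen hTgen htrans] at this
  exact this

lemma inv_mem_generators (hSsym : S⁻¹ = S) (hTsym : T⁻¹ = T) {a : PermWreath H G X}
    (ha : a ∈ generators S T ξ) : a⁻¹ ∈ generators S T ξ := by
  classical
  rcases ha with ⟨s, hs, rfl⟩ | ⟨t, ht, rfl⟩
  · exact Or.inl ⟨s⁻¹, hSsym ▸ Set.inv_mem_inv.mpr hs, by ext <;> simp⟩
  · refine Or.inr ⟨t⁻¹, hTsym ▸ Set.inv_mem_inv.mpr ht, ?_⟩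
    ext x
    · by_cases hx : x = ξ <;> simp [atPoint_eq_mulSingle, hx]
    · simp

lemma inv_restrictedGenerators (hSsym : S⁻¹ = S) (hTsym : T⁻¹ = T) :
    (restrictedGenerators S T ξ)⁻¹ = restrictedGenerators S T ξ := by
  ext w
  exact ⟨fun hw => inv_inv w ▸ inv_mem_generators hSsym hTsym hw,
    inv_mem_generators hSsym hTsym⟩

lemma restrictedGenerators_finite (hS : S.Finite) (hT : T.Finite) :
    (restrictedGenerators S T ξ).Finite :=
  ((hS.image _).union (hT.image _)).preimage Subtype.val_injective.injOn

/-- Every product of `n` generators lies in `envelope S T ξ n`: the word `ws` collects the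
inverses of its `S`-letters, in reverse order. -/
def envelope (S : Set G) (T : Set H) (ξ : X) (n : ℕ) : Set (PermWreath H G X) :=
  {w | ∃ ws : List G, (∀ s ∈ ws, s ∈ S) ∧ ws.length ≤ n ∧ ws.prod = w.pt⁻¹ ∧
    mulSupport w.fn ⊆ invertedOrbit ξ ws ∧
    ∀ A : Finset X, ∑ x ∈ A, wordNorm T (w.fn x) ≤ n}

lemma envelope_mono {m n : ℕ} (h : m ≤ n) : envelope S T ξ m ⊆ envelope S T ξ n := by
  rintro w ⟨ws, hws, hlen, hprod, hsupp, hsum⟩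
  exact ⟨ws, hws, hlen.trans h, hprod, hsupp, fun A => (hsum A).trans h⟩

lemma one_mem_envelope : (1 : PermWreath H G X) ∈ envelope S T ξ 0 :=
  ⟨[], by simp, le_rfl, by simp, by simp, by simp [wordNorm_one]⟩

lemma mk_one_mul_mem_envelope (hSsym : S⁻¹ = S) {s : G} (hs : s ∈ S) {n : ℕ}
    {v : PermWreath H G X} (hv : v ∈ envelope S T ξ n) :
    ⟨1, s⟩ * v ∈ envelope S T ξ (n + 1) := by
  obtain ⟨ws, hws, hlen, hprod, hsupp, hsum⟩ := hv
  refine ⟨ws ++ [s⁻¹], ?_, by simpa using hlen, by simp [hprod], fun x hx => ?_, fun A => ?_⟩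
  · simpa [or_imp, forall_and] using ⟨hws, hSsym ▸ Set.inv_mem_inv.mpr hs⟩
  · refine smul_invertedOrbit_subset_append_singleton ξ ws s⁻¹
      ⟨op s • x, hsupp (by simpa using hx), ?_⟩
    simp [← mul_smul]
  · calc ∑ x ∈ A, wordNorm T ((⟨1, s⟩ * v : PermWreath H G X).fn x)
        = ∑ x ∈ A.map (MulAction.toPerm (op s)).toEmbedding, wordNorm T (v.fn x) := by
          simp [Finset.sum_map]
      _ ≤ n + 1 := (hsum _).trans n.le_succ

lemma sum_wordNorm_mulSingle_le [DecidableEq X] {t : H} (ht : t ∈ T) (A : Finset X) :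
    ∑ x ∈ A, wordNorm T ((Pi.mulSingle ξ t : X → H) x) ≤ 1 := by
  calc ∑ x ∈ A, wordNorm T ((Pi.mulSingle ξ t : X → H) x)
        ≤ ∑ x ∈ A, if x = ξ then 1 else 0 :=
        Finset.sum_le_sum fun x _ => by
          by_cases hx : x = ξ <;> simp [hx, wordNorm_one, wordNorm_le_one ht]
    _ ≤ 1 := by rw [Finset.sum_ite_eq']; split_ifs <;> simp

lemma mk_atPoint_mul_mem_envelope (hTsym : T⁻¹ = T) (hTgen : Subgroup.closure T = ⊤)
    {t : H} (ht : t ∈ T) {n : ℕ} {v : PermWreath H G X} (hv : v ∈ envelope S T ξ n) :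
    ⟨atPoint ξ t, 1⟩ * v ∈ envelope S T ξ (n + 1) := by
  classical
  obtain ⟨ws, hws, hlen, hprod, hsupp, hsum⟩ := hv
  have hfn : (⟨atPoint ξ t, 1⟩ * v : PermWreath H G X).fn = Pi.mulSingle ξ t * v.fn := by
    ext x
    simp [atPoint_eq_mulSingle]
  refine ⟨ws, hws, hlen.trans n.le_succ, by simp [hprod], ?_, fun A => ?_⟩
  · rw [hfn]
    refine (mulSupport_mul _ _).trans (Set.union_subset ?_ hsupp)
    exact Pi.mulSupport_mulSingle_subset.trans
      (Set.singleton_subset_iff.mpr (self_mem_invertedOrbit ξ ws))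
  · calc ∑ x ∈ A, wordNorm T ((⟨atPoint ξ t, 1⟩ * v : PermWreath H G X).fn x)
        ≤ ∑ x ∈ A, (wordNorm T ((Pi.mulSingle ξ t : X → H) x) + wordNorm T (v.fn x)) := by
          rw [hfn]
          exact Finset.sum_le_sum fun x _ => wordNorm_mul_le hTsym hTgen _ _
      _ ≤ n + 1 := by
          rw [Finset.sum_add_distrib]
          linarith [hsum A, sum_wordNorm_mulSingle_le (ξ := ξ) ht A]

lemma list_prod_mem_envelope (hSsym : S⁻¹ = S) (hTsym : T⁻¹ = T)
    (hTgen : Subgroup.closure T = ⊤) {l : List (PermWreath H G X)}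
    (hl : ∀ a ∈ l, a ∈ generators S T ξ) : l.prod ∈ envelope S T ξ l.length := by
  induction l with
  | nil => exact one_mem_envelope
  | cons a l ih =>
    rw [List.prod_cons, List.length_cons]
    have hv := ih fun b hb => hl b (List.mem_cons_of_mem a hb)
    rcases hl a List.mem_cons_self with ⟨s, hs, rfl⟩ | ⟨t, ht, rfl⟩
    · exact mk_one_mul_mem_envelope hSsym hs hv
    · exact mk_atPoint_mul_mem_envelope hTsym hTgen ht hv

lemma coe_mem_envelope_of_wordNorm_le (hSsym : S⁻¹ = S) (hSgen : Subgroup.closure S = ⊤)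
    (hTsym : T⁻¹ = T) (hTgen : Subgroup.closure T = ⊤)
    (htrans : ∀ x y : X, ∃ g : G, op g • x = y) {R : ℕ} {w : restricted H G X}
    (hw : wordNorm (restrictedGenerators S T ξ) w ≤ R) :
    (w : PermWreath H G X) ∈ envelope S T ξ R := by
  obtain ⟨l, hl, hlen, rfl⟩ := exists_list_prod_eq_length_eq_wordNorm
    (inv_restrictedGenerators (ξ := ξ) hSsym hTsym)
    (closure_restrictedGenerators hSgen hTgen htrans) w
  have := list_prod_mem_envelope hSsym hTsym hTgen
    (l := l.map ((↑) : restricted H G X → PermWreath H G X)) fun _ ha => by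
      obtain ⟨b, hb, rfl⟩ := List.mem_map.mp ha
      exact hl b hb
  rw [List.length_map, hlen, ← SubmonoidClass.coe_list_prod] at this
  exact envelope_mono hw this

def box (S : Set G) (ν : H → ℕ) (O : Set X) (R : ℕ) : Set (PermWreath H G X) :=
  {w | wordNorm S w.pt ≤ R ∧ mulSupport w.fn ⊆ O ∧
    ∀ A : Finset X, ∑ x ∈ A, ν (w.fn x) ≤ R}

lemma envelope_subset_biUnion_box (hSsym : S⁻¹ = S) (R : ℕ) :
    envelope S T ξ R ⊆ ⋃ O ∈ invertedOrbits S ξ R, box S (wordNorm T) O R := by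
  rintro w ⟨ws, hws, hlen, hprod, hsupp, hsum⟩
  exact Set.mem_biUnion ⟨ws, hws, hlen, rfl⟩
    ⟨(wordNorm_le_length_of_prod_eq_inv hSsym hws hprod).trans hlen, hsupp, hsum⟩

lemma box_finite_and_ncard_le {ν : H → ℕ} {R : ℕ} (hG : {g : G | wordNorm S g ≤ R}.Finite)
    (hν : {h | ν h ≤ R}.Finite) (O : Finset X) :
    (box S ν (O : Set X) R).Finite ∧
      (box S ν (O : Set X) R).ncard ≤
        growthFn S R * {φ : O → H | ∑ x, ν (φ x) ≤ R}.ncard := by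
  have hfin : ({g : G | wordNorm S g ≤ R} ×ˢ {φ : O → H | ∑ x, ν (φ x) ≤ R}).Finite :=
    hG.prod ((Set.Finite.pi fun _ => hν).subset (setOf_sum_le_subset_pi ν R))
  have hmaps : ∀ w ∈ box S ν (O : Set X) R, (w.pt, fun x : O => w.fn x) ∈
      {g : G | wordNorm S g ≤ R} ×ˢ {φ : O → H | ∑ x, ν (φ x) ≤ R} := by
    rintro w ⟨hpt, -, hsum⟩
    exact ⟨hpt, (Finset.sum_coe_sort O fun x => ν (w.fn x)).trans_le (hsum O)⟩
  have hinj : Set.InjOn (fun w : PermWreath H G X => (w.pt, fun x : O => w.fn x))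
      (box S ν (O : Set X) R) := by
    rintro w ⟨-, hw, -⟩ w' ⟨-, hw', -⟩ h
    simp only [Prod.mk.injEq, funext_iff, Subtype.forall] at h
    refine PermWreath.ext (funext fun x => ?_) h.1
    by_cases hx : x ∈ O
    · exact h.2 x hx
    · rw [notMem_mulSupport.mp fun h => hx (hw h), notMem_mulSupport.mp fun h => hx (hw' h)]
  refine ⟨(hfin.subset (Set.image_subset_iff.mpr hmaps)).of_finite_image hinj, ?_⟩
  rw [growthFn_eq_ncard, ← Set.ncard_prod]
  exact Set.ncard_le_ncard_of_injOn _ hmaps hinj hfin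

lemma box_invertedOrbit_finite_and_ncard_le (hSfin : S.Finite) (hSsym : S⁻¹ = S)
    (hSgen : Subgroup.closure S = ⊤) (hTfin : T.Finite) (hTsym : T⁻¹ = T)
    (hTgen : Subgroup.closure T = ⊤) {C ε : ℝ} (hε : 0 < ε) (hC₁ : 1 ≤ C)
    (hC : ∀ r : ℕ, (growthFn T r : ℝ) ≤ C * exp (ε * r)) {R : ℕ} {ws : List G}
    (hws : ∀ s ∈ ws, s ∈ S) (hlen : ws.length ≤ R) :
    (box S (wordNorm T) (invertedOrbit ξ ws) R).Finite ∧
      ((box S (wordNorm T) (invertedOrbit ξ ws) R).ncard : ℝ) ≤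
        growthFn S R * (exp (2 * ε * R) * (C / (1 - exp (-ε))) ^ invOrbitGrowth S ξ R) := by
  have hO := invertedOrbit_finite ξ ws
  obtain ⟨hfin, hcard⟩ := box_finite_and_ncard_le (finite_setOf_wordNorm_le hSfin hSsym hSgen R)
    (finite_setOf_wordNorm_le hTfin hTsym hTgen R) hO.toFinset
  rw [hO.coe_toFinset] at hfin hcard
  refine ⟨hfin, (Nat.cast_le.mpr hcard).trans ?_⟩
  push_cast
  gcongr
  refine (ncard_setOf_sum_le_le_of_growth _ (finite_setOf_wordNorm_le hTfin hTsym hTgen) hε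
    (fun r => growthFn_eq_ncard (S := T) r ▸ hC r) R).trans ?_
  refine mul_le_mul_of_nonneg_left (pow_le_pow_right₀ (one_le_div_one_sub_exp_neg hε hC₁) ?_)
    (exp_pos _).le
  rw [Fintype.card_coe, ← Set.ncard_eq_toFinset_card _ hO]
  exact ncard_invertedOrbit_le_invOrbitGrowth ξ hws hlen

theorem growthFn_restrictedGenerators_le (hSfin : S.Finite) (hSsym : S⁻¹ = S)
    (hSgen : Subgroup.closure S = ⊤) (hTfin : T.Finite) (hTsym : T⁻¹ = T)
    (hTgen : Subgroup.closure T = ⊤) (htrans : ∀ x y : X, ∃ g : G, op g • x = y)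
    {C ε : ℝ} (hε : 0 < ε) (hC₁ : 1 ≤ C)
    (hC : ∀ r : ℕ, (growthFn T r : ℝ) ≤ C * exp (ε * r)) (R : ℕ) :
    (growthFn (restrictedGenerators S T ξ) R : ℝ) ≤
      invOrbitChoices S ξ R * growthFn S R *
        (exp (2 * ε * R) * (C / (1 - exp (-ε))) ^ invOrbitGrowth S ξ R) := by
  have hbox : ∀ O ∈ invertedOrbits S ξ R, (box S (wordNorm T) O R).Finite ∧
        ((box S (wordNorm T) O R).ncard : ℝ) ≤
          growthFn S R * (exp (2 * ε * R) * (C / (1 - exp (-ε))) ^ invOrbitGrowth S ξ R) := by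
    rintro _ ⟨ws, hws, hlen, rfl⟩
    exact box_invertedOrbit_finite_and_ncard_le hSfin hSsym hSgen hTfin hTsym hTgen hε hC₁ hC
      hws hlen
  have horbits := invertedOrbits_finite ξ hSfin R
  have hcover := envelope_subset_biUnion_box (T := T) (ξ := ξ) hSsym R
  have henv : (envelope S T ξ R).Finite :=
    (horbits.biUnion fun O hO => (hbox O hO).1).subset hcover
  calc (growthFn (restrictedGenerators S T ξ) R : ℝ)
      ≤ (envelope S T ξ R).ncard := by
        rw [growthFn_eq_ncard]
        exact_mod_cast Set.ncard_le_ncard_of_injOn Subtype.val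
          (fun w hw => coe_mem_envelope_of_wordNorm_le hSsym hSgen hTsym hTgen htrans hw)
          Subtype.val_injective.injOn henv
    _ ≤ _ := ncard_le_ncard_mul_of_subset_biUnion horbits (fun O hO => (hbox O hO).1) hcover
          fun O hO => (hbox O hO).2
    _ = _ := by rw [invOrbitChoices_eq_ncard, ← mul_assoc]

end PermWreath

/-- **Subexponential growth of permutational wreath products**: let `G` (with finite
symmetric generating set `S`, of subexponential growth) act transitively on the right on
a set `X` with basepoint `ξ`, and let `H` (with finite symmetric generating set `T`)
have subexponential growth.  If the inverted orbit growth `Δ` is sublinear and the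
inverted orbit choice growth `Σ` is subexponential, then the (restricted) permutational
wreath product `W = H ≀_X G`, with generating set `U = S ∪ {t@ξ : t ∈ T}`, has
subexponential growth. -/
theorem permWreath_subexponential_growth {H G X : Type*} [Group H] [Group G]
    [MulAction Gᵐᵒᵖ X]
    (S : Set G) (T : Set H) (ξ : X)
    (hSfin : S.Finite) (hSsym : S⁻¹ = S) (hSgen : Subgroup.closure S = ⊤)
    (hTfin : T.Finite) (hTsym : T⁻¹ = T) (hTgen : Subgroup.closure T = ⊤)
    (htrans : ∀ x y : X, ∃ g : G, MulOpposite.op g • x = y)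
    (hGsub : Filter.Tendsto (fun R : ℕ => (growthFn S R : ℝ) ^ ((R : ℝ)⁻¹))
      Filter.atTop (nhds 1))
    (hHsub : Filter.Tendsto (fun R : ℕ => (growthFn T R : ℝ) ^ ((R : ℝ)⁻¹))
      Filter.atTop (nhds 1))
    (hΔ : Filter.Tendsto (fun R : ℕ => (invOrbitGrowth S ξ R : ℝ) / (R : ℝ))
      Filter.atTop (nhds 0))
    (hSg : Filter.Tendsto (fun R : ℕ => (invOrbitChoices S ξ R : ℝ) ^ ((R : ℝ)⁻¹))
      Filter.atTop (nhds 1)) :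
    let U : Set ↥(PermWreath.restricted H G X) :=
      {w | (w : PermWreath H G X) ∈
        ((fun s : G => PermWreath.mk (1 : X → H) s) '' S) ∪
        ((fun t : H => PermWreath.mk (atPoint ξ t) (1 : G)) '' T)}
    Filter.Tendsto (fun R : ℕ => (growthFn U R : ℝ) ^ ((R : ℝ)⁻¹))
      Filter.atTop (nhds 1) := by
  intro U
  refine tendsto_rpow_inv_of_eventually_le_exp_mul (fun R => ?_) fun ε hε => ?_
  · exact_mod_cast one_le_growthFn (PermWreath.restrictedGenerators_finite hSfin hTfin)
      (PermWreath.inv_restrictedGenerators hSsym hTsym)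
      (PermWreath.closure_restrictedGenerators hSgen hTgen htrans) R
  have hε' : 0 < ε / 5 := by positivity
  obtain ⟨C, hC₁, hC⟩ :=
    exists_le_mul_exp_of_tendsto_rpow_inv (fun _ => Nat.cast_nonneg _) hHsub hε'
  have hM := one_pos.trans_le (one_le_div_one_sub_exp_neg hε' hC₁)
  filter_upwards [eventually_le_exp_mul_of_tendsto_rpow_inv (fun _ => Nat.cast_nonneg _) hSg hε',
    eventually_le_exp_mul_of_tendsto_rpow_inv (fun _ => Nat.cast_nonneg _) hGsub hε',
    eventually_pow_le_exp_mul hΔ hM hε'] with R hchoices hgrowth hpow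
  calc (growthFn U R : ℝ)
      ≤ invOrbitChoices S ξ R * growthFn S R *
          (exp (2 * (ε / 5) * R) * (C / (1 - exp (-(ε / 5)))) ^ invOrbitGrowth S ξ R) :=
        PermWreath.growthFn_restrictedGenerators_le hSfin hSsym hSgen hTfin hTsym hTgen htrans
          hε' hC₁ hC R
    _ ≤ exp (ε / 5 * R) * exp (ε / 5 * R) * (exp (2 * (ε / 5) * R) * exp (ε / 5 * R)) := by
        gcongr
    _ = exp (ε * R) := by rw [← exp_add, ← exp_add, ← exp_add]; ring_nf
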